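/- Let Ω : ℝ⁴ → Λ²((ℝ⁴)*) be as in Honda's model: Ω(p) = 2x₁(dt∧dx₁ + dx₂∧dx₃) + 2x₂(dt∧dx₂ + dx₃∧dx₁) - 2x₃(dt∧dx₃ + dx₁∧dx₂) for p = (t,x₁,x₂,x₃). Let σ₋ : ℝ⁴ → ℝ⁴ be the affine map σ₋(t, x₁, x₂, x₃) = (t + 2π, -x₁, x₂, -x₃), with linear part L. Then σ₋ preserves Ω: for every p ∈ ℝ⁴ and all v, w ∈ ℝ⁴, Ω(σ₋(p))(L v, L w) = Ω(p)(v, w). The same holds for σ₊(t,x) = (t + 2π, x). -/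
import Mathlib

/-- Honda's model 2-form Ω, evaluated pointwise as an alternating bilinear form:
Ω(p)(v,w) for p = (t,x₁,x₂,x₃) with coordinates indexed 0,1,2,3. -/
def hondaBilin (p v w : Fin 4 → ℝ) : ℝ :=
  2 * p 1 * (v 0 * w 1 - v 1 * w 0 + v 2 * w 3 - v 3 * w 2)
    + 2 * p 2 * (v 0 * w 2 - v 2 * w 0 + v 3 * w 1 - v 1 * w 3)
    - 2 * p 3 * (v 0 * w 3 - v 3 * w 0 + v 1 * w 2 - v 2 * w 1)

/-- σ₋(t,x₁,x₂,x₃) = (t+2π, -x₁, x₂, -x₃). -/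
noncomputable def sigmaMinus (p : Fin 4 → ℝ) : Fin 4 → ℝ :=
  ![p 0 + 2 * Real.pi, -p 1, p 2, -p 3]

/-- The linear part of σ₋. -/
def Lminus (v : Fin 4 → ℝ) : Fin 4 → ℝ := ![v 0, -v 1, v 2, -v 3]

/-- σ₊(t,x₁,x₂,x₃) = (t+2π, x₁, x₂, x₃); its linear part is the identity. -/
noncomputable def sigmaPlus (p : Fin 4 → ℝ) : Fin 4 → ℝ :=
  ![p 0 + 2 * Real.pi, p 1, p 2, p 3]

/-- Both σ₋ and σ₊ preserve Honda's local model form Ω: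
Ω(σ(p))(Lv, Lw) = Ω(p)(v,w). -/
theorem sigma_preserves_hondaForm :
    (∀ p v w : Fin 4 → ℝ,
      hondaBilin (sigmaMinus p) (Lminus v) (Lminus w) = hondaBilin p v w) ∧
    (∀ p v w : Fin 4 → ℝ,
      hondaBilin (sigmaPlus p) v w = hondaBilin p v w) := by
  constructor <;> intro p v w <;>
    simp [hondaBilin, sigmaMinus, sigmaPlus, Lminus] <;> ring
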